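/- arXiv:2308.16838 — 3 statements merged into one kernel-verified Lean document; each statement's English description precedes it below -/
import Mathlib

section
/- Let G be a finite group and p a prime. There is an equivalence of categories Sh(O(G), J_sipp) ≃ PSh(O_p(G)) between sheaves of sets on the orbit category with the sipp topology and presheaves of sets on the p-orbit category, given by restriction along the inclusion O_p(G) → O(G) and by right Kan extension in the other direction. -/
open CategoryTheory

/-- The category of finite (left) `G`-sets. -/
abbrev GSet (G : Type) [Group G] := Action FintypeCat (MonCat.of G)

/-- The orbit `G/H` as a finite `G`-set. -/
noncomputable def orb (G : Type) [Group G] [Finite G] (H : Subgroup G) : GSet G :=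
  haveI : Fintype (G ⧸ H) := Fintype.ofFinite _
  Action.FintypeCat.ofMulAction G (FintypeCat.of (G ⧸ H))

/-- The orbit category `O(G)`. -/
noncomputable abbrev OrbitCat (G : Type) [Group G] [Finite G] :=
  InducedCategory (GSet G) (orb G)

/-- A subgroup regarded as an object of the orbit category. -/
noncomputable def toOrb (G : Type) [Group G] [Finite G] (H : Subgroup G) : OrbitCat G := H

/-- The full subcategory `O_p(G)` of orbits of `p`-subgroups. -/
noncomputable abbrev OrbitCatP (G : Type) [Group G] [Finite G] (p : ℕ) :=
  InducedCategory (GSet G) (fun Q : {Q : Subgroup G // IsPGroup p Q} => orb G Q.1)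

/-- The inclusion `O_p(G) → O(G)`. -/
noncomputable def inclP (G : Type) [Group G] [Finite G] (p : ℕ) :
    OrbitCatP G p ⥤ OrbitCat G where
  obj Q := toOrb G Q.1
  map f := InducedCategory.homMk f.hom

/-- `J` is the sipp topology on `O(G)`. -/
def IsSippTopology (G : Type) [Group G] [Finite G] (p : ℕ)
    (J : GrothendieckTopology (OrbitCat G)) : Prop :=
  ∀ (H : Subgroup G) (S : Sieve (toOrb G H)), S ∈ J (toOrb G H) ↔
    ∃ (P : Subgroup G) (f : toOrb G P ⟶ toOrb G H),
      P ≤ H ∧ IsPGroup p P ∧ ¬ p ∣ P.relIndex H ∧ S f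

/-!
Every orbit `G/H` receives the projection from `G/P`, `P` a Sylow `p`-subgroup of `H`, so the
`p`-orbits are cover-dense for the sipp topology. On a `p`-orbit `G/Q` the only covering sieve is
the maximal one: a subgroup of the `p`-group `Q` of index prime to `p` is `Q` itself, and every
endomorphism of an orbit is an automorphism, since an equivariant map into a transitive `G`-set is
surjective. Thus `O_p(G)` is a dense subsite carrying the trivial topology, and the comparison
lemma identifies `Sh(O(G), J_sipp)` with `Sh(O_p(G), ⊥) = PSh(O_p(G))`, the functor being
restriction.
-/

theorem IsPGroup.eq_of_le_of_not_dvd_relIndex {G : Type*} [Group G] {p : ℕ} [Fact p.Prime]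
    {P Q : Subgroup G} [Finite Q] (hQ : IsPGroup p Q) (hPQ : P ≤ Q)
    (hindex : ¬ p ∣ P.relIndex Q) : P = Q := by
  obtain ⟨n, hn⟩ := hQ.index (P.subgroupOf Q)
  have hn0 : n = 0 := by
    by_contra hn0
    exact hindex (by rw [Subgroup.relIndex, hn]; exact dvd_pow_self p hn0)
  rw [← Subgroup.relIndex, hn0, pow_zero, Subgroup.relIndex_eq_one] at hn
  exact le_antisymm hPQ hn

theorem Subgroup.exists_isPGroup_le_not_dvd_relIndex {G : Type*} [Group G] (p : ℕ)
    [Fact p.Prime] (H : Subgroup G) [Finite H] :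
    ∃ P ≤ H, IsPGroup p P ∧ ¬ p ∣ P.relIndex H := by
  obtain ⟨S⟩ : Nonempty (Sylow p H) := inferInstance
  refine ⟨S.map H.subtype, Subgroup.map_subtype_le _, S.isPGroup'.map _, ?_⟩
  rw [Subgroup.relIndex, Subgroup.subgroupOf,
    Subgroup.comap_map_eq_self_of_injective H.subtype_injective]
  exact S.not_dvd_index

section OrbitCategory

variable {G : Type} [Group G] [Finite G]

noncomputable def orbMapOfLE {P H : Subgroup G} (h : P ≤ H) : orb G P ⟶ orb G H where
  hom := FintypeCat.homMk (Subgroup.quotientMapOfLE h)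
  comm g := by
    ext x
    induction x using QuotientGroup.induction_on
    rfl

theorem orb_hom_surjective {H K : Subgroup G} (f : orb G H ⟶ orb G K) :
    Function.Surjective f.hom := fun (y : G ⧸ K) => by
  obtain ⟨g, hg⟩ :=
    MulAction.exists_smul_eq (α := G ⧸ K) G (f.hom (QuotientGroup.mk 1 : G ⧸ H)) y
  exact ⟨g • (QuotientGroup.mk 1 : G ⧸ H), (ConcreteCategory.congr_hom (f.comm g) _).trans hg⟩

instance orb_isIso_of_endo {H : Subgroup G} (f : orb G H ⟶ orb G H) : IsIso f := by
  have : IsIso f.hom := (ConcreteCategory.isIso_iff_bijective f.hom).2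
    (orb_hom_surjective f).bijective_of_finite
  exact Action.isIso_of_hom_isIso f

variable (G) in
noncomputable def inclPFullyFaithful (p : ℕ) : (inclP G p).FullyFaithful where
  preimage f := InducedCategory.homMk f.hom

instance {p : ℕ} : (inclP G p).Full := (inclPFullyFaithful G p).full
instance {p : ℕ} : (inclP G p).Faithful := (inclPFullyFaithful G p).faithful

variable {p : ℕ} [Fact p.Prime] {J : GrothendieckTopology (OrbitCat G)}

theorem IsSippTopology.eq_top_of_mem (hJ : IsSippTopology G p J) {Q : Subgroup G}
    (hQ : IsPGroup p Q) {S : Sieve (toOrb G Q)} (hS : S ∈ J (toOrb G Q)) : S = ⊤ := by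
  obtain ⟨P, f, hPQ, -, hindex, hf⟩ := (hJ Q S).1 hS
  obtain rfl := hQ.eq_of_le_of_not_dvd_relIndex hPQ hindex
  have : IsIso f := isIso_of_fully_faithful (inducedFunctor (orb G)) f
  exact Sieve.id_mem_iff_eq_top.1 (by simpa using S.downward_closed hf (inv f))

theorem IsSippTopology.coverByImage_mem (hJ : IsSippTopology G p J) (H : Subgroup G) :
    Sieve.coverByImage (inclP G p) (toOrb G H) ∈ J (toOrb G H) := by
  obtain ⟨P, hPH, hP, hindex⟩ := H.exists_isPGroup_le_not_dvd_relIndex p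
  refine (hJ H _).2 ⟨P, InducedCategory.homMk (orbMapOfLE hPH), hPH, hP, hindex, ?_⟩
  exact ⟨⟨⟨P, hP⟩, 𝟙 _, _, Category.id_comp _⟩⟩

theorem IsSippTopology.inclP_isDenseSubsite (hJ : IsSippTopology G p J) :
    (inclP G p).IsDenseSubsite ⊥ J where
  isCoverDense' := ⟨fun H => hJ.coverByImage_mem H⟩
  functorPushforward_mem_iff {Q S} := by
    rw [GrothendieckTopology.bot_covering]
    constructor
    · intro hS
      rw [← Sieve.functorPullback_functorPushforward_eq (F := inclP G p) (S := S),
        hJ.eq_top_of_mem Q.2 hS]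
      exact Sieve.functorPullback_top _ _
    · rintro rfl
      rw [Sieve.functorPushforward_top]
      exact J.top_mem _

end OrbitCategory

/-- Let `G` be a finite group and `p` a prime.  There is an equivalence of categories
`Sh(O(G), J_sipp) ≃ PSh(O_p(G))`, whose functor is restriction of presheaves along the
inclusion `O_p(G) → O(G)` (and whose inverse is therefore given by right Kan
extension). -/
theorem sheaves_sipp_equiv_presheaves_p_orbits
    (G : Type) [Group G] [Finite G] (p : ℕ) (hp : p.Prime)
    (J : GrothendieckTopology (OrbitCat G)) (hJ : IsSippTopology G p J) :
    ∃ E : Sheaf J (Type) ≌ ((OrbitCatP G p)ᵒᵖ ⥤ Type),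
      Nonempty (E.functor ≅
        sheafToPresheaf J (Type) ⋙ (Functor.whiskeringLeft _ _ _).obj (inclP G p).op) := by
  have : Fact p.Prime := ⟨hp⟩
  have := hJ.inclP_isDenseSubsite
  exact ⟨(Functor.IsDenseSubsite.sheafEquiv ⊥ J (inclP G p) Type).symm.trans
    (sheafBotEquivalence _), ⟨Iso.refl _⟩⟩
end

section
/- Let G be a finite group, p a prime dividing |G|, and k a field. The constant presheaf with value k^× on the orbit category O(G) is a sheaf for the sipp topology. -/
open CategoryTheory

/-!
Every sipp-covering sieve contains an arrow, and any cospan `G/A → G/H ← G/B` in the orbit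
category is completed to a commutative square by `G/1`, so the sipp topology is coarser than the
atomic topology. For the atomic topology, any two members of a compatible family of a constant
presheaf are compared along such a square, so the family is constant and its common value is the
unique amalgamation.
-/

namespace CategoryTheory

universe v u w

variable {C : Type u} [Category.{v} C]

theorem Presieve.isSheafFor_const_of_rightOreCondition
    (hro : GrothendieckTopology.RightOreCondition C) (T : Type w) {X : C} {S : Sieve X}
    (hS : ∃ (Y : C) (f : Y ⟶ X), S f) :
    Presieve.IsSheafFor ((Functor.const Cᵒᵖ).obj T) S.arrows := by
  obtain ⟨Y₀, f₀, hf₀⟩ := hS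
  intro x hx
  have hconst : ∀ {Y : C} (f : Y ⟶ X) (hf : S f), (x f hf : T) = (x f₀ hf₀ : T) :=
    fun f hf => by
      obtain ⟨W, u, v, huv⟩ := hro f f₀
      exact hx u v hf hf₀ huv
  refine ⟨(x f₀ hf₀ : T), ?_, ?_⟩
  · intro Y f hf
    exact (hconst f hf).symm
  · intro t ht
    exact ht f₀ hf₀

theorem Presieve.isSheaf_const_atomic (hro : GrothendieckTopology.RightOreCondition C)
    (T : Type w) :
    Presieve.IsSheaf (GrothendieckTopology.atomic hro) ((Functor.const Cᵒᵖ).obj T) :=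
  fun _ _ hS => isSheafFor_const_of_rightOreCondition hro T hS

end CategoryTheory

namespace OrbitCat

variable {G : Type} [Group G] [Finite G]

lemma hom_smul {A H : Subgroup G} (f : toOrb G A ⟶ toOrb G H) (σ : G) (x : G ⧸ A) :
    f.hom (σ • x) = σ • f.hom x :=
  ConcreteCategory.congr_hom (f.hom.comm σ) x

lemma hom_mk {A H : Subgroup G} (f : toOrb G A ⟶ toOrb G H) (σ : G) :
    f.hom (σ : G ⧸ A) = σ • f.hom ((1 : G) : G ⧸ A) := by
  rw [← hom_smul, MulAction.Quotient.smul_mk, smul_eq_mul, mul_one]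

noncomputable def mulRightFromBot (A : Subgroup G) (β : G) : toOrb G ⊥ ⟶ toOrb G A :=
  letI := Fintype.ofFinite (G ⧸ A)
  letI := Fintype.ofFinite (G ⧸ (⊥ : Subgroup G))
  InducedCategory.homMk (Action.FintypeCat.toEndHom ⊥ β⁻¹ ≫
    Action.FintypeCat.quotientToQuotientOfLE A ⊥ bot_le)

lemma mulRightFromBot_mk (A : Subgroup G) (β σ : G) :
    (mulRightFromBot A β).hom (σ : G ⧸ (⊥ : Subgroup G)) = (σ * β : G ⧸ A) := by
  -- `toEndHom N g` is right multiplication by `g⁻¹`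
  show ((σ * β⁻¹⁻¹ : G) : G ⧸ A) = _
  rw [inv_inv]

theorem exists_comp_eq_comp {A B H : Subgroup G} (f : toOrb G A ⟶ toOrb G H)
    (g : toOrb G B ⟶ toOrb G H) :
    ∃ (C : OrbitCat G) (u : C ⟶ toOrb G A) (v : C ⟶ toOrb G B), u ≫ f = v ≫ g := by
  obtain ⟨β, hβ⟩ : ∃ β : G, β • g.hom ((1 : G) : G ⧸ B) = f.hom ((1 : G) : G ⧸ A) :=
    MulAction.exists_smul_eq G (α := G ⧸ H) _ _
  refine ⟨toOrb G ⊥, mulRightFromBot A 1, mulRightFromBot B β, ?_⟩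
  apply InducedCategory.hom_ext
  apply Action.hom_ext
  apply FintypeCat.hom_ext
  intro x
  induction x using QuotientGroup.induction_on with | H σ
  show f.hom ((mulRightFromBot A 1).hom (σ : G ⧸ (⊥ : Subgroup G))) =
    g.hom ((mulRightFromBot B β).hom (σ : G ⧸ (⊥ : Subgroup G)))
  rw [mulRightFromBot_mk, mulRightFromBot_mk, mul_one, hom_mk f, hom_mk g, mul_smul, hβ]

theorem rightOreCondition : GrothendieckTopology.RightOreCondition (OrbitCat G) :=
  fun f g => exists_comp_eq_comp f g

end OrbitCat

theorem constant_presheaf_units_is_sipp_sheaf_general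
    (G : Type) [Group G] [Finite G] (p : ℕ)
    (k : Type) [Field k]
    (J : GrothendieckTopology (OrbitCat G)) (hJ : IsSippTopology G p J) :
    Presieve.IsSheaf J ((Functor.const (OrbitCat G)ᵒᵖ).obj (kˣ : Type)) := by
  refine Presieve.isSheaf_of_le _ ?_ (Presieve.isSheaf_const_atomic OrbitCat.rightOreCondition _)
  intro H S hS
  obtain ⟨P, f, -, -, -, hf⟩ := (hJ H S).mp hS
  exact ⟨_, f, hf⟩

/-- Let `G` be a finite group, `p` a prime dividing `|G|`, and `k` a field.  The
constant presheaf with value `k^×` on the orbit category `O(G)` is a sheaf for the sipp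
topology. -/
theorem constant_presheaf_units_is_sipp_sheaf
    (G : Type) [Group G] [Finite G] (p : ℕ) (hp : p.Prime) (hpG : p ∣ Nat.card G)
    (k : Type) [Field k]
    (J : GrothendieckTopology (OrbitCat G)) (hJ : IsSippTopology G p J) :
    Presieve.IsSheaf J ((Functor.const (OrbitCat G)ᵒᵖ).obj (kˣ : Type)) :=
  constant_presheaf_units_is_sipp_sheaf_general G p k J hJ
end

section
/- Let G be a finite group, p a prime, and H ≤ G. The comma/overcategory ι/(G/H) of the inclusion ι: O_p°(G) → O(G), whose objects are pairs (G/Q, t: G/Q → G/H) with Q a non-trivial p-subgroup, is connected if p divides |H| and empty if p does not divide |H|. -/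
open CategoryTheory

/-- The full subcategory `O_p°(G)` of orbits of non-trivial `p`-subgroups. -/
noncomputable abbrev OrbitCatP0 (G : Type) [Group G] [Finite G] (p : ℕ) :=
  InducedCategory (GSet G) (fun Q : {Q : Subgroup G // IsPGroup p Q ∧ Q ≠ ⊥} => orb G Q.1)

/-- The inclusion `ι : O_p°(G) → O(G)`. -/
noncomputable def inclP0 (G : Type) [Group G] [Finite G] (p : ℕ) :
    OrbitCatP0 G p ⥤ OrbitCat G where
  obj Q := toOrb G Q.1
  map f := InducedCategory.homMk f.hom

/-!
Every `G`-map `G/Q → G/H` is `xQ ↦ xgH` for some `g` with `Q ≤ gHg⁻¹`. Hence an object of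
`ι/(G/H)` forces a non-trivial `p`-subgroup `g⁻¹Qg` inside `H`, so `p ∣ |H|`. Conversely, if
`p ∣ |H|`, fix a Sylow `p`-subgroup `S` of `H`; it is non-trivial. For any object
`(Q, xQ ↦ xgH)` the `p`-subgroup `g⁻¹Qg ≤ H` lies in some `H`-conjugate `hSh⁻¹`, and
`xQ ↦ xghS` is a morphism to `(S, xS ↦ xH)` because `h ∈ H`. So every object maps to this
one, and the category is connected.
-/

open scoped Pointwise

namespace Subgroup

variable {G : Type} [Group G]

theorem mem_conj_smul_iff {g x : G} {L : Subgroup G} :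
    x ∈ MulAut.conj g • L ↔ g⁻¹ * x * g ∈ L := by
  rw [mem_pointwise_smul_iff_inv_smul_mem, ← map_inv, MulAut.smul_def, MulAut.conj_apply,
    inv_inv]

theorem card_conj_smul [Finite G] (g : G) (L : Subgroup G) :
    Nat.card (MulAut.conj g • L : Subgroup G) = Nat.card L :=
  Nat.card_congr (equivSMul (MulAut.conj g) L).toEquiv.symm

end Subgroup

theorem IsPGroup.exists_le_conj_smul_map_sylow {G : Type} [Group G] {p : ℕ} [Fact p.Prime]
    {H : Subgroup G} [Finite H] (S : Sylow p H) {P : Subgroup G} (hP : IsPGroup p P)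
    (hPH : P ≤ H) : ∃ h ∈ H, P ≤ MulAut.conj h • (S : Subgroup H).map H.subtype := by
  obtain ⟨T, hPT⟩ := (hP.comap_subtype (K := H)).exists_le_sylow
  obtain ⟨h, rfl⟩ := MulAction.exists_smul_eq H S T
  refine ⟨h, h.2, ?_⟩
  rw [← Subgroup.map_subgroupOf_eq_of_le hPH]
  refine (Subgroup.map_mono hPT).trans ?_
  rintro - ⟨-, ⟨s, hs, rfl⟩, rfl⟩
  exact ⟨s, ⟨s, hs, rfl⟩, rfl⟩

theorem CategoryTheory.isConnected_of_nonempty_hom_to {C : Type*} [Category C] (x : C)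
    (h : ∀ y : C, Nonempty (y ⟶ x)) : IsConnected C := by
  have : Nonempty C := ⟨x⟩
  exact zigzag_isConnected fun y z =>
    (Zigzag.of_hom (h y).some).trans (Zigzag.of_inv (h z).some)

section Orbits

variable {G : Type} [Group G] [Finite G]

noncomputable def orbMap {K L : Subgroup G} (g : G) (hg : K ≤ MulAut.conj g • L) :
    orb G K ⟶ orb G L where
  hom := FintypeCat.homMk fun x => Quotient.map' (· * g)
    (fun a b hab => by
      rw [QuotientGroup.leftRel_apply] at hab ⊢
      simpa [mul_assoc] using Subgroup.mem_conj_smul_iff.1 (hg hab)) x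
  comm g₀ := FintypeCat.hom_ext _ _ fun x => by
    induction x using Quotient.inductionOn' with
    | h a => exact congrArg QuotientGroup.mk (mul_assoc (show G from g₀) a g)

theorem orb_hom_apply_mk {K L : Subgroup G} (f : orb G K ⟶ orb G L) (x : G) :
    f.hom (x : G ⧸ K) = x • f.hom ((1 : G) : G ⧸ K) := by
  have h := ConcreteCategory.congr_hom (f.comm x) ((1 : G) : G ⧸ K)
  change f.hom ((x * 1 : G) : G ⧸ K) = x • f.hom ((1 : G) : G ⧸ K) at h
  rwa [mul_one] at h

theorem orb_hom_ext {K L : Subgroup G} {f f' : orb G K ⟶ orb G L}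
    (h : f.hom ((1 : G) : G ⧸ K) = f'.hom ((1 : G) : G ⧸ K)) : f = f' := by
  apply Action.Hom.ext
  refine FintypeCat.hom_ext _ _ fun y => ?_
  induction y using Quotient.inductionOn' with
  | h a => exact (orb_hom_apply_mk f a).trans (h ▸ (orb_hom_apply_mk f' a).symm)

theorem exists_eq_orbMap {K L : Subgroup G} (f : orb G K ⟶ orb G L) :
    ∃ (g : G) (hg : K ≤ MulAut.conj g • L), f = orbMap g hg := by
  obtain ⟨g, hg⟩ := QuotientGroup.mk_surjective (f.hom ((1 : G) : G ⧸ K))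
  have hf : ∀ x : G, f.hom (x : G ⧸ K) = ((x * g : G) : G ⧸ L) := fun x => by
    rw [orb_hom_apply_mk, ← hg]; rfl
  have hKL : K ≤ MulAut.conj g • L := fun k hk => by
    have : ((k * g : G) : G ⧸ L) = (g : G ⧸ L) := by
      rw [← hf, ← one_mul g, ← hf]
      exact congrArg f.hom (QuotientGroup.eq.2 (by simpa using hk))
    simpa [Subgroup.mem_conj_smul_iff, mul_assoc] using QuotientGroup.eq.1 this.symm
  exact ⟨g, hKL, orb_hom_ext (by rw [hf]; rfl)⟩

end Orbits

section Overcategory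

variable {G : Type} [Group G] [Finite G] {p : ℕ} {H : Subgroup G}

noncomputable def sylowOver (S : Sylow p H) (hS : (S : Subgroup H) ≠ ⊥) :
    CostructuredArrow (inclP0 G p) (toOrb G H) :=
  CostructuredArrow.mk (Y := ⟨(S : Subgroup H).map H.subtype, S.2.map _,
      (Subgroup.map_eq_bot_iff_of_injective _ H.subtype_injective).not.2 hS⟩)
    (InducedCategory.homMk (orbMap 1 (by
      rw [map_one, one_smul]
      exact Subgroup.map_subtype_le _)))

theorem nonempty_hom_sylowOver [Fact p.Prime] (S : Sylow p H) (hS : (S : Subgroup H) ≠ ⊥)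
    (X : CostructuredArrow (inclP0 G p) (toOrb G H)) : Nonempty (X ⟶ sylowOver S hS) := by
  obtain ⟨g, hg, hX⟩ := exists_eq_orbMap (X.hom.hom : orb G X.left.1 ⟶ orb G H)
  obtain ⟨h, hH, hle⟩ := IsPGroup.exists_le_conj_smul_map_sylow S
    (X.left.2.1.map (MulAut.conj g)⁻¹.toMonoidHom) (Subgroup.subset_pointwise_smul_iff.1 hg)
  have hgh : X.left.1 ≤ MulAut.conj (g * h) • (S : Subgroup H).map H.subtype := by
    rw [map_mul, mul_smul, Subgroup.subset_pointwise_smul_iff]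
    exact hle
  refine ⟨CostructuredArrow.homMk (InducedCategory.homMk (orbMap (g * h) hgh)) ?_⟩
  apply InducedCategory.hom_ext
  change orbMap (g * h) hgh ≫ (sylowOver S hS).hom.hom = X.hom.hom
  rw [hX]
  refine orb_hom_ext (QuotientGroup.eq.2 (?_ : _ ∈ H))
  simpa [mul_assoc] using H.inv_mem hH

theorem dvd_card_of_costructuredArrow (hp : p.Prime)
    (X : CostructuredArrow (inclP0 G p) (toOrb G H)) : p ∣ Nat.card H := by
  have : Fact p.Prime := ⟨hp⟩
  obtain ⟨g, hg, -⟩ := exists_eq_orbMap (X.hom.hom : orb G X.left.1 ⟶ orb G H)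
  have hpQ : p ∣ Nat.card X.left.1 :=
    X.left.2.1.card_eq_or_dvd.resolve_left (Subgroup.card_eq_one.not.2 X.left.2.2)
  calc p ∣ Nat.card X.left.1 := hpQ
    _ ∣ Nat.card (MulAut.conj g • H : Subgroup G) := Subgroup.card_dvd_of_le hg
    _ = Nat.card H := Subgroup.card_conj_smul g H

end Overcategory

/-- Let `G` be a finite group, `p` a prime and `H ≤ G`.  The overcategory `ι/(G/H)` of
the inclusion `ι : O_p°(G) → O(G)`, whose objects are pairs `(G/Q, t : G/Q → G/H)` with
`Q` a non-trivial `p`-subgroup, is connected if `p` divides `|H|` and empty if `p` does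
not divide `|H|`. -/
theorem overcategory_connected_iff_p_divides
    (G : Type) [Group G] [Finite G] (p : ℕ) (hp : p.Prime) (H : Subgroup G) :
    (p ∣ Nat.card H → IsConnected (CostructuredArrow (inclP0 G p) (toOrb G H))) ∧
    (¬ p ∣ Nat.card H → IsEmpty (CostructuredArrow (inclP0 G p) (toOrb G H))) := by
  have : Fact p.Prime := ⟨hp⟩
  refine ⟨fun hdvd => ?_, fun hndvd => ⟨fun X => hndvd (dvd_card_of_costructuredArrow hp X)⟩⟩
  obtain ⟨S⟩ : Nonempty (Sylow p H) := inferInstance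
  exact isConnected_of_nonempty_hom_to _ (nonempty_hom_sylowOver S (S.ne_bot_of_dvd_card hdvd))
end
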